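/- (Proposition 1.2, BLER) Fix N ≥ 0, m > 0 and γ̇ > 0. Let q₁, q₂ > 0 satisfy 1 − ρ(γ̇)·qᵢ/√m > 0 for i = 1,2, let λ ∈ [0,1], and let q > 0 satisfy Q(q) = λ·Q(q₁) + (1−λ)·Q(q₂). Then F(q) ≤ λ·F(q₁) + (1−λ)·F(q₂), where F(q) = exp((N·ln2/m + μ(γ̇)·q/√m)/(1 − ρ(γ̇)·q/√m)) − 1; that is, the EAR function is convex with respect to the block error rate ε. -/

import Mathlib

open MeasureTheory

/-- The Gaussian Q-function Q(x) = (1/√(2π))·∫ₓ^∞ exp(−t²/2) dt. -/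
noncomputable def Qfun (x : ℝ) : ℝ :=
  (Real.sqrt (2 * Real.pi))⁻¹ * ∫ t in Set.Ioi x, Real.exp (-t ^ 2 / 2)

/-- ρ(γ) = 1/((1+γ)·√(γ²+2γ)) -/
noncomputable def rho (γ : ℝ) : ℝ := 1 / ((1 + γ) * Real.sqrt (γ ^ 2 + 2 * γ))

/-- μ(γ) = √(γ²+2γ)/(1+γ) − ln(1+γ)/((1+γ)·√(γ²+2γ)) -/
noncomputable def mu (γ : ℝ) : ℝ :=
  Real.sqrt (γ ^ 2 + 2 * γ) / (1 + γ) -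
    Real.log (1 + γ) / ((1 + γ) * Real.sqrt (γ ^ 2 + 2 * γ))

/-- The EAR function expressed through q = Q⁻¹(ε):
F(q) = exp((N·ln2/m + μ(γ̇)·q/√m)/(1 − ρ(γ̇)·q/√m)) − 1. -/
noncomputable def Fear (N m γ' q : ℝ) : ℝ :=
  Real.exp ((N * Real.log 2 / m + mu γ' * q / Real.sqrt m) /
    (1 - rho γ' * q / Real.sqrt m)) - 1

/-!
Write `p = λ q₁ + (1 - λ) q₂`. Since `Q` is convex on `[0, ∞)`,
`Q(q) = λ Q(q₁) + (1 - λ) Q(q₂) ≥ Q(p)`, and since `Q` is strictly decreasing, `q ≤ p`.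
On the half-line `1 - c x > 0` the exponent of `F` is the linear-fractional function
`(a + b x) / (1 - c x) = (a + b / c) (1 - c x)⁻¹ - b / c`, where `a = N ln 2 / m ≥ 0`,
`b = μ(γ̇) / √m ≥ 0` and `c = ρ(γ̇) / √m > 0`;
it is nondecreasing and convex, hence so is `F`, and
`F(q) ≤ F(p) ≤ λ F(q₁) + (1 - λ) F(q₂)`.
-/

open Real Set

theorem integrable_exp_neg_sq_div_two : Integrable fun t : ℝ => exp (-t ^ 2 / 2) := by
  convert integrable_exp_neg_mul_sq (b := (1 : ℝ) / 2) (by norm_num) using 3 with t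
  ring

theorem Qfun_eq_sub_intervalIntegral (x : ℝ) :
    Qfun x = Qfun 0 - (√(2 * π))⁻¹ * ∫ t in (0 : ℝ)..x, exp (-t ^ 2 / 2) := by
  rw [← intervalIntegral.integral_Ioi_sub_Ioi' integrable_exp_neg_sq_div_two.integrableOn
    integrable_exp_neg_sq_div_two.integrableOn, Qfun, Qfun]
  ring

theorem hasDerivAt_Qfun (x : ℝ) :
    HasDerivAt Qfun (-((√(2 * π))⁻¹ * exp (-x ^ 2 / 2))) x := by
  have hcont : Continuous fun t : ℝ => exp (-t ^ 2 / 2) := by fun_prop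
  have hprim := intervalIntegral.integral_hasDerivAt_right
    (integrable_exp_neg_sq_div_two.intervalIntegrable (a := 0) (b := x))
    (hcont.stronglyMeasurableAtFilter _ _) hcont.continuousAt
  rw [funext Qfun_eq_sub_intervalIntegral]
  exact (hprim.const_mul _).const_sub _

theorem Qfun_strictAnti : StrictAnti Qfun :=
  strictAnti_of_hasDerivAt_neg hasDerivAt_Qfun fun _ => neg_neg_of_pos (by positivity)

theorem convexOn_Qfun : ConvexOn ℝ (Ici 0) Qfun := by
  have hderiv : deriv Qfun = fun x => -((√(2 * π))⁻¹ * exp (-x ^ 2 / 2)) :=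
    funext fun x => (hasDerivAt_Qfun x).deriv
  refine MonotoneOn.convexOn_of_deriv (convex_Ici 0)
    (fun x _ => (hasDerivAt_Qfun x).continuousAt.continuousWithinAt)
    (fun x _ => (hasDerivAt_Qfun x).differentiableAt.differentiableWithinAt) ?_
  rw [hderiv, interior_Ici]
  intro x (hx : 0 < x) y _ hxy
  dsimp only
  gcongr

section LinearFractional

variable {a b c : ℝ}

theorem div_one_sub_mul_eq_mul_inv_sub (x : ℝ) (hc : c ≠ 0) (hx : 1 - c * x ≠ 0) :
    (a + b * x) / (1 - c * x) = (a * c + b) / c * (1 - c * x)⁻¹ - b / c := by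
  rw [mul_comm] at hx
  field_simp
  ring

theorem convexOn_inv_one_sub_mul (c : ℝ) :
    ConvexOn ℝ {x | 0 < 1 - c * x} fun x => (1 - c * x)⁻¹ := by
  have hmix : ∀ x y s t : ℝ, s + t = 1 →
      1 - c * (s • x + t • y) = s • (1 - c * x) + t • (1 - c * y) := by
    intro x y s t hst
    simp only [smul_eq_mul]
    linear_combination -hst
  refine ⟨fun x hx y hy s t hs ht hst => ?_, fun x hx y hy s t hs ht hst => ?_⟩
  · rw [mem_ofPred_eq, hmix x y s t hst]
    exact convex_Ioi (0 : ℝ) hx hy hs ht hst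
  · simpa only [hmix x y s t hst, zpow_neg_one] using (convexOn_zpow (-1)).2 hx hy hs ht hst

theorem convexOn_div_one_sub_mul (hc : 0 < c) (h : 0 ≤ a * c + b) :
    ConvexOn ℝ {x | 0 < 1 - c * x} fun x => (a + b * x) / (1 - c * x) := by
  refine (((convexOn_inv_one_sub_mul c).smul (div_nonneg h hc.le)).add_const (-(b / c))).congr
    fun x hx => ?_
  simp only [Pi.add_apply, smul_eq_mul, div_one_sub_mul_eq_mul_inv_sub x hc.ne' (ne_of_gt hx)]
  ring

theorem monotoneOn_div_one_sub_mul (hc : 0 < c) (h : 0 ≤ a * c + b) :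
    MonotoneOn (fun x => (a + b * x) / (1 - c * x)) {x | 0 < 1 - c * x} := by
  intro x hx y (hy : 0 < 1 - c * y) hxy
  simp only [div_one_sub_mul_eq_mul_inv_sub x hc.ne' (ne_of_gt hx),
    div_one_sub_mul_eq_mul_inv_sub y hc.ne' hy.ne']
  have hK : 0 ≤ (a * c + b) / c := div_nonneg h hc.le
  gcongr

end LinearFractional

theorem ConvexOn.exp_comp {s : Set ℝ} {f : ℝ → ℝ} (hf : ConvexOn ℝ s f) :
    ConvexOn ℝ s fun x => exp (f x) :=
  ⟨hf.1, fun _ hx _ hy _ _ ha hb hab =>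
    (exp_le_exp.2 (hf.2 hx hy ha hb hab)).trans (convexOn_exp.2 trivial trivial ha hb hab)⟩

theorem rho_pos {γ : ℝ} (hγ : 0 < γ) : 0 < rho γ := by
  unfold rho
  have : 0 < γ ^ 2 + 2 * γ := by positivity
  positivity

theorem mu_nonneg {γ : ℝ} (hγ : 0 < γ) : 0 ≤ mu γ := by
  have hs : 0 < γ ^ 2 + 2 * γ := by positivity
  have hlog : log (1 + γ) ≤ γ ^ 2 + 2 * γ := by
    nlinarith [log_le_sub_one_of_pos (by positivity : 0 < 1 + γ)]
  unfold mu
  rw [sub_nonneg, div_le_div_iff₀ (by positivity) (by positivity)]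
  nlinarith [mul_self_sqrt hs.le]

theorem Fear_eq (N m γ' x : ℝ) :
    Fear N m γ' x = exp ((N * log 2 / m + mu γ' / √m * x) / (1 - rho γ' / √m * x)) - 1 := by
  simp only [Fear, div_mul_eq_mul_div]

theorem setOf_Fear_domain_eq (m γ' : ℝ) :
    {x | 0 < 1 - rho γ' * x / √m} = {x | 0 < 1 - rho γ' / √m * x} := by
  simp only [div_mul_eq_mul_div]

section Fear

variable {N m γ' : ℝ}

theorem Fear_exponent_coeff_nonneg (hN : 0 ≤ N) (hm : 0 < m) (hγ' : 0 < γ') :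
    0 ≤ N * log 2 / m * (rho γ' / √m) + mu γ' / √m := by
  have := rho_pos hγ'
  have := mu_nonneg hγ'
  have : 0 ≤ log 2 := log_nonneg one_le_two
  positivity

theorem convexOn_Fear (hN : 0 ≤ N) (hm : 0 < m) (hγ' : 0 < γ') :
    ConvexOn ℝ {x | 0 < 1 - rho γ' * x / √m} (Fear N m γ') := by
  rw [setOf_Fear_domain_eq]
  refine (((convexOn_div_one_sub_mul (div_pos (rho_pos hγ') (sqrt_pos.2 hm))
    (Fear_exponent_coeff_nonneg hN hm hγ')).exp_comp).add_const (-1)).congr fun x _ => ?_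
  simp only [Fear_eq, Pi.add_apply, sub_eq_add_neg]

theorem monotoneOn_Fear (hN : 0 ≤ N) (hm : 0 < m) (hγ' : 0 < γ') :
    MonotoneOn (Fear N m γ') {x | 0 < 1 - rho γ' * x / √m} := by
  rw [setOf_Fear_domain_eq]
  intro x hx y hy hxy
  rw [Fear_eq, Fear_eq]
  exact sub_le_sub_right (exp_le_exp.2 (monotoneOn_div_one_sub_mul
    (div_pos (rho_pos hγ') (sqrt_pos.2 hm)) (Fear_exponent_coeff_nonneg hN hm hγ') hx hy hxy)) 1

end Fear

theorem stmt_13_general (N m γ' q₁ q₂ q lam : ℝ) (hN : 0 ≤ N) (hm : 0 < m) (hγ' : 0 < γ')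
    (hq₁ : 0 < q₁) (hq₂ : 0 < q₂)
    (hpos₁ : 0 < 1 - rho γ' * q₁ / Real.sqrt m)
    (hpos₂ : 0 < 1 - rho γ' * q₂ / Real.sqrt m)
    (hlam₀ : 0 ≤ lam) (hlam₁ : lam ≤ 1)
    (hQ : Qfun q = lam * Qfun q₁ + (1 - lam) * Qfun q₂) :
    Fear N m γ' q ≤ lam * Fear N m γ' q₁ + (1 - lam) * Fear N m γ' q₂ := by
  have hF := convexOn_Fear hN hm hγ'
  set p := lam * q₁ + (1 - lam) * q₂
  have hp : 0 < 1 - rho γ' * p / √m :=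
    hF.1 hpos₁ hpos₂ hlam₀ (sub_nonneg.2 hlam₁) (add_sub_cancel lam 1)
  have hQp : Qfun p ≤ Qfun q := hQ ▸
    convexOn_Qfun.2 (mem_Ici.2 hq₁.le) (mem_Ici.2 hq₂.le) hlam₀ (sub_nonneg.2 hlam₁)
      (add_sub_cancel lam 1)
  have hqp : q ≤ p := Qfun_strictAnti.le_iff_ge.1 hQp
  have hq : 0 < 1 - rho γ' * q / √m := hp.trans_le (by
    have := (rho_pos hγ').le
    gcongr)
  calc Fear N m γ' q ≤ Fear N m γ' p := monotoneOn_Fear hN hm hγ' hq hp hqp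
    _ ≤ lam * Fear N m γ' q₁ + (1 - lam) * Fear N m γ' q₂ :=
      hF.2 hpos₁ hpos₂ hlam₀ (sub_nonneg.2 hlam₁) (add_sub_cancel lam 1)

/-- The EAR function is convex w.r.t. the BLER ε. -/
theorem stmt_13 (N m γ' q₁ q₂ q lam : ℝ) (hN : 0 ≤ N) (hm : 0 < m) (hγ' : 0 < γ')
    (hq₁ : 0 < q₁) (hq₂ : 0 < q₂)
    (hpos₁ : 0 < 1 - rho γ' * q₁ / Real.sqrt m)
    (hpos₂ : 0 < 1 - rho γ' * q₂ / Real.sqrt m)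
    (hlam₀ : 0 ≤ lam) (hlam₁ : lam ≤ 1) (hq : 0 < q)
    (hQ : Qfun q = lam * Qfun q₁ + (1 - lam) * Qfun q₂) :
    Fear N m γ' q ≤ lam * Fear N m γ' q₁ + (1 - lam) * Fear N m γ' q₂ :=
  stmt_13_general N m γ' q₁ q₂ q lam hN hm hγ' hq₁ hq₂ hpos₁ hpos₂ hlam₀ hlam₁ hQ
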